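/- Let a ∈ (0,1), b := √(1 − a²), and ε ∈ [0,1). Then for every z = (z₁,z₂) ∈ 𝔹₂ one has |z₁² + 2bz₂|² + ε²·|a²z₂ − bz₁²|² < (2 − a²)². Consequently, the function F_ε maps 𝔹₂ into 𝔻, i.e. |F_ε(z)| < 1 for all z ∈ 𝔹₂. -/

import Mathlib

/-!
Put `u = z₁²`, `v = z₂`, so `|u| + |v|² < 1`, and use `a² = 1 - b²`. Expanding,
`|u + 2bv|² + |a²v - bu|² = (1 + b²)(|u|² + 2b Re(u v̄) + (1 + b²)|v|²)
  ≤ (1 + b²)((|u| + b|v|)² + |v|²)`,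
and `(|u| + b|v|)² + |v|² < 1 + b²` because `|u| < 1 - |v|²` and
`(1 - s² + bs)² + s² = 1 + b² - (1 - s²)(b - s)²`. Since `ε² ≤ 1` this gives the first claim.
Dividing by `(2 - a²)²` it reads `|F|² + |w| < 1` for the quantity `w` under the square root
of `F_ε`, and `|1 - w| ≥ 1 - |w|` then gives `|F|² < |1 - w| = |(1 - w)^{1/2}|²`.
-/

open Metric Set Complex

noncomputable section

/-- `ℂⁿ` with the Euclidean norm; `𝔹ₙ` is `Metric.ball 0 1` in this space. -/
abbrev En (n : ℕ) := EuclideanSpace ℂ (Fin n)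

/-- The Möbius map `m_a` interchanging `0` and `a`. -/
def mob (a z : ℂ) : ℂ := (a - z) / (1 - (starRingEnd ℂ) a * z)

/-- A Blaschke product of degree `k`: `z ↦ η * ∏ j, m_{α j}(z)` with `|η| = 1`, `α j ∈ 𝔻`. -/
def IsBlaschke (k : ℕ) (B : ℂ → ℂ) : Prop :=
  ∃ η : ℂ, ‖η‖ = 1 ∧ ∃ α : Fin k → ℂ, (∀ j, α j ∈ ball (0 : ℂ) 1) ∧
    ∀ z : ℂ, B z = η * ∏ j, mob (α j) z

/-- The Pick problem `𝔹ₙ → 𝔻`, `z j ↦ lam j`, is extremal: it is solvable by a holomorphic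
map `𝔹ₙ → 𝔻`, but by no holomorphic solution with `sup_{𝔹ₙ} |G| < 1`. -/
def ExtremalPick {n : ℕ} {ι : Type} (z : ι → En n) (lam : ι → ℂ) : Prop :=
  (∃ F : En n → ℂ, DifferentiableOn ℂ F (ball 0 1) ∧
      MapsTo F (ball (0 : En n) 1) (ball (0 : ℂ) 1) ∧ ∀ j, F (z j) = lam j) ∧
  ¬ ∃ G : En n → ℂ, DifferentiableOn ℂ G (ball 0 1) ∧ (∀ j, G (z j) = lam j) ∧
      ∃ r : ℝ, r < 1 ∧ ∀ x ∈ ball (0 : En n) 1, ‖G x‖ ≤ r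

/-- An extremal 3-point Pick problem is non-degenerate if no 2-point subproblem is extremal. -/
def ExtremalPick3Nondeg {n : ℕ} (z : Fin 3 → En n) (lam : Fin 3 → ℂ) : Prop :=
  ExtremalPick z lam ∧
    ∀ i j : Fin 3, i ≠ j → ¬ ExtremalPick ![z i, z j] ![lam i, lam j]

/-- The function `F(z) = (z₁² + 2bz₂)/(2 − a²)` with `b = √(1 − a²)`. -/
def Fa (a : ℝ) (z : En 2) : ℂ :=
  ((z 0) ^ 2 + 2 * ((Real.sqrt (1 - a ^ 2) : ℝ) : ℂ) * z 1) / (2 - (a : ℂ) ^ 2)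

/-- The function `F_ε(z) = F(z)/√(1 − (ε²/(2−a²)²)(bz₁² − a²z₂)²)`, principal branch. -/
def Feps (a ε : ℝ) (z : En 2) : ℂ :=
  Fa a z /
    ((1 - ((ε : ℂ) ^ 2 / (2 - (a : ℂ) ^ 2) ^ 2) *
        (((Real.sqrt (1 - a ^ 2) : ℝ) : ℂ) * (z 0) ^ 2 - (a : ℂ) ^ 2 * z 1) ^ 2) ^
      ((1 : ℂ) / 2))

lemma sq_add_mul_add_sq_lt {t s b : ℝ} (ht : 0 ≤ t) (hs : 0 ≤ s) (hb : 0 ≤ b)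
    (hts : t + s ^ 2 < 1) : (t + b * s) ^ 2 + s ^ 2 < 1 + b ^ 2 := by
  have hs1 : s ^ 2 ≤ 1 := by linarith
  have hlt : (t + b * s) ^ 2 < (1 - s ^ 2 + b * s) ^ 2 := by
    gcongr
    linarith
  nlinarith [mul_nonneg (sub_nonneg.2 hs1) (sq_nonneg (b - s))]

lemma norm_add_smul_sq_add_norm_smul_sub_sq_le {E : Type*} [NormedAddCommGroup E]
    [InnerProductSpace ℝ E] {b : ℝ} (hb : 0 ≤ b) (u v : E) :
    ‖u + (2 * b) • v‖ ^ 2 + ‖(1 - b ^ 2) • v - b • u‖ ^ 2 ≤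
      (1 + b ^ 2) * ((‖u‖ + b * ‖v‖) ^ 2 + ‖v‖ ^ 2) := by
  rw [norm_add_sq_real, norm_sub_sq_real, norm_smul, norm_smul, norm_smul,
    real_inner_smul_right, real_inner_smul_left, real_inner_smul_right, real_inner_comm u v,
    Real.norm_eq_abs, Real.norm_eq_abs, Real.norm_eq_abs, mul_pow, mul_pow, mul_pow,
    sq_abs, sq_abs, sq_abs]
  nlinarith [mul_le_mul_of_nonneg_left (real_inner_le_norm u v)
    (by positivity : 0 ≤ 2 * b * (1 + b ^ 2))]

lemma norm_sq_add_mul_norm_sq_lt {a b δ : ℝ} (hab : a ^ 2 + b ^ 2 = 1) (hb : 0 ≤ b)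
    (hδ : δ ≤ 1) {u v : ℂ} (huv : ‖u‖ + ‖v‖ ^ 2 < 1) :
    ‖u + 2 * (b : ℂ) * v‖ ^ 2 + δ * ‖(a : ℂ) ^ 2 * v - (b : ℂ) * u‖ ^ 2 < (2 - a ^ 2) ^ 2 := by
  have hsmul : ‖u + 2 * (b : ℂ) * v‖ ^ 2 + ‖(a : ℂ) ^ 2 * v - (b : ℂ) * u‖ ^ 2 =
      ‖u + (2 * b) • v‖ ^ 2 + ‖(1 - b ^ 2) • v - b • u‖ ^ 2 := by
    simp only [Complex.real_smul, ← hab]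
    push_cast
    ring_nf
  calc ‖u + 2 * (b : ℂ) * v‖ ^ 2 + δ * ‖(a : ℂ) ^ 2 * v - (b : ℂ) * u‖ ^ 2
      ≤ ‖u + (2 * b) • v‖ ^ 2 + ‖(1 - b ^ 2) • v - b • u‖ ^ 2 := by
        rw [← hsmul]
        linarith [mul_le_of_le_one_left (sq_nonneg ‖(a : ℂ) ^ 2 * v - (b : ℂ) * u‖) hδ]
    _ ≤ (1 + b ^ 2) * ((‖u‖ + b * ‖v‖) ^ 2 + ‖v‖ ^ 2) :=
        norm_add_smul_sq_add_norm_smul_sub_sq_le hb u v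
    _ < (1 + b ^ 2) * (1 + b ^ 2) := mul_lt_mul_of_pos_left
        (sq_add_mul_add_sq_lt (norm_nonneg u) (norm_nonneg v) hb huv) (by positivity)
    _ = (2 - a ^ 2) ^ 2 := by rw [show 2 - a ^ 2 = 1 + b ^ 2 by linarith]; ring

lemma norm_div_sqrt_one_sub_lt_one {x y : ℂ} (h : ‖x‖ ^ 2 + ‖y‖ < 1) :
    ‖x / (1 - y) ^ ((1 : ℂ) / 2)‖ < 1 := by
  have hlt : ‖x‖ ^ 2 < ‖1 - y‖ := by linarith [norm_sub_norm_le (1 : ℂ) y, norm_one (α := ℂ)]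
  have hpos : 0 < ‖1 - y‖ := (sq_nonneg _).trans_lt hlt
  have hnorm : ‖(1 - y) ^ ((1 : ℂ) / 2)‖ = √‖1 - y‖ := by
    rw [norm_cpow_of_ne_zero (norm_pos_iff.1 hpos), Real.sqrt_eq_rpow]
    norm_num
  rw [norm_div, hnorm, div_lt_one (Real.sqrt_pos.2 hpos), Real.lt_sqrt (norm_nonneg x)]
  exact hlt

lemma norm_sq_add_norm_sq_lt_one {𝕜 : Type*} [RCLike 𝕜] {z : EuclideanSpace 𝕜 (Fin 2)} (hz : z ∈ ball 0 1) :
    ‖z 0‖ ^ 2 + ‖z 1‖ ^ 2 < 1 := by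
  have hz' : ‖z‖ ^ 2 < 1 := by
    rw [mem_ball_zero_iff] at hz
    nlinarith [norm_nonneg z]
  simpa [EuclideanSpace.norm_sq_eq, Fin.sum_univ_two] using hz'

theorem stmt_9 (a ε : ℝ) (ha : a ∈ Ioo (0 : ℝ) 1) (hε : ε ∈ Ico (0 : ℝ) 1)
    (b : ℝ) (hb : b = Real.sqrt (1 - a ^ 2)) :
    (∀ z ∈ ball (0 : En 2) 1,
      (‖(z 0) ^ 2 + 2 * (b : ℂ) * z 1‖) ^ 2 +
          ε ^ 2 * (‖(a : ℂ) ^ 2 * z 1 - (b : ℂ) * (z 0) ^ 2‖) ^ 2 <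
        (2 - a ^ 2) ^ 2) ∧
    ∀ z ∈ ball (0 : En 2) 1, ‖Feps a ε z‖ < 1 := by
  have hb0 : 0 ≤ b := hb ▸ Real.sqrt_nonneg _
  have hab : a ^ 2 + b ^ 2 = 1 := by
    rw [hb, Real.sq_sqrt (by nlinarith [ha.1, ha.2])]; ring
  have hε2 : ε ^ 2 ≤ 1 := by nlinarith [hε.1, hε.2]
  have hbound : ∀ z ∈ ball (0 : En 2) 1,
      ‖(z 0) ^ 2 + 2 * (b : ℂ) * z 1‖ ^ 2 +
        ε ^ 2 * ‖(a : ℂ) ^ 2 * z 1 - (b : ℂ) * (z 0) ^ 2‖ ^ 2 < (2 - a ^ 2) ^ 2 := fun z hz =>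
    norm_sq_add_mul_norm_sq_lt hab hb0 hε2 (by simpa using norm_sq_add_norm_sq_lt_one hz)
  refine ⟨hbound, fun z hz => ?_⟩
  have h2a : 0 < 2 - a ^ 2 := by linarith [sq_nonneg b]
  have h2a' : ‖(2 : ℂ) - (a : ℂ) ^ 2‖ = 2 - a ^ 2 := by
    rw [show (2 : ℂ) - (a : ℂ) ^ 2 = ((2 - a ^ 2 : ℝ) : ℂ) by push_cast; ring,
      Complex.norm_real, Real.norm_of_nonneg h2a.le]
  apply norm_div_sqrt_one_sub_lt_one
  rw [Fa, ← hb, norm_div, norm_mul, norm_div, norm_pow, norm_pow, norm_pow, h2a',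
    Complex.norm_real, Real.norm_of_nonneg hε.1, norm_sub_rev, div_pow,
    div_mul_eq_mul_div, ← add_div, div_lt_one (by positivity)]
  exact hbound z hz
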